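/- In misère Partizan Kayles there exist positions G and H with G + H equivalent to 0 modulo the Kayles universe, yet o⁻(G) = R and o⁻(H) = P: namely G = S₁ (a strip of length 1) and H = S₂ (a strip of length 2). In particular, an invertible position of outcome R can have inverse of outcome P. -/

import Mathlib

/-!
Weigh a strip of length `n` by `+1`, `-1` or `0` according as `n ≡ 1`, `2` or `0 (mod 3)`, and a
position by the sum of its strips' weights. A Left move changes the weight by `-1` or `+2`, a
Right move by `+1` or `-2`. Left can always lower the weight by exactly one unless every strip has
length `2` (and then the weight is negative), and Right can raise it by exactly one whenever he can
move. Induction on the total length then shows that Left wins moving first iff the weight lies in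
`{0, -3, -6, …}` and moving second iff it lies in `{-1, -4, -7, …}`. So `o⁻` depends only on the
weight, which is `1` for `S₁`, `-1` for `S₂` and `0` for `S₁ + S₂`.
-/

/-- Add a strip of length `k` to a position (strips of length 0 are discarded). -/
def addStrip (m : Multiset ℕ) (k : ℕ) : Multiset ℕ := if k = 0 then m else k ::ₘ m

/-- Left removes one square from a strip of length `n ≥ 1`, leaving strips `i` and `n-1-i`. -/
def LeftMove (G G' : Multiset ℕ) : Prop :=
  ∃ n ∈ G, ∃ i, i + 1 ≤ n ∧ G' = addStrip (addStrip (G.erase n) i) (n - 1 - i)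

/-- Right removes two adjacent squares from a strip of length `n ≥ 2`, leaving `i` and `n-2-i`. -/
def RightMove (G G' : Multiset ℕ) : Prop :=
  ∃ n ∈ G, ∃ i, i + 2 ≤ n ∧ G' = addStrip (addStrip (G.erase n) i) (n - 2 - i)

mutual
  /-- Misère play: Left, to move, wins (a player unable to move wins). -/
  inductive LeftWinsMover : Multiset ℕ → Prop
    | cannot (G : Multiset ℕ) : (¬ ∃ G', LeftMove G G') → LeftWinsMover G
    | move (G G' : Multiset ℕ) : LeftMove G G' → LeftWinsWaiter G' → LeftWinsMover G
  /-- Misère play: Left wins with Right to move. -/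
  inductive LeftWinsWaiter : Multiset ℕ → Prop
    | intro (G : Multiset ℕ) : (∃ G', RightMove G G') →
        (∀ G', RightMove G G' → LeftWinsMover G') → LeftWinsWaiter G
end

inductive Outcome | L | N | P | R
  deriving DecidableEq

open Classical in
/-- The misère outcome `o⁻(G)`. -/
noncomputable def outcome (G : Multiset ℕ) : Outcome :=
  if LeftWinsMover G then (if LeftWinsWaiter G then Outcome.L else Outcome.N)
  else (if LeftWinsWaiter G then Outcome.P else Outcome.R)

/-- The partial order on outcomes: `L` greatest, `R` least, `N` and `P` incomparable. -/
def Outcome.le (a b : Outcome) : Prop := a = b ∨ a = Outcome.R ∨ b = Outcome.L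

/-- `pos k j` is the position `kS₁ + jS₂`. -/
def pos (k j : ℕ) : Multiset ℕ := Multiset.replicate k 1 + Multiset.replicate j 2

def stripWeight (n : ℕ) : ℤ := if n % 3 = 1 then 1 else if n % 3 = 2 then -1 else 0

lemma stripWeight_zero : stripWeight 0 = 0 := rfl

def weight (G : Multiset ℕ) : ℤ := (G.map stripWeight).sum

lemma sum_map_addStrip {M : Type*} [AddCommMonoid M] {f : ℕ → M} (hf : f 0 = 0)
    (m : Multiset ℕ) (k : ℕ) : ((addStrip m k).map f).sum = (m.map f).sum + f k := by
  unfold addStrip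
  split_ifs with hk
  · simp [hk, hf]
  · simp [add_comm]

lemma sum_map_split {M : Type*} [AddCommMonoid M] {f : ℕ → M} (hf : f 0 = 0)
    {G : Multiset ℕ} {n : ℕ} (hn : n ∈ G) (i j : ℕ) :
    ((addStrip (addStrip (G.erase n) i) j).map f).sum + f n = (G.map f).sum + f i + f j := by
  rw [sum_map_addStrip hf, sum_map_addStrip hf, ← Multiset.sum_map_erase hn]
  abel

lemma weight_split {G : Multiset ℕ} {n : ℕ} (hn : n ∈ G) (i j : ℕ) :
    weight (addStrip (addStrip (G.erase n) i) j) =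
      weight G - stripWeight n + stripWeight i + stripWeight j := by
  have := sum_map_split (f := stripWeight) stripWeight_zero hn i j
  unfold weight
  linarith

lemma sum_split {G : Multiset ℕ} {n : ℕ} (hn : n ∈ G) (i j : ℕ) :
    (addStrip (addStrip (G.erase n) i) j).sum + n = G.sum + i + j := by
  simpa using sum_map_split (f := id) rfl hn i j

lemma weight_add (G H : Multiset ℕ) : weight (G + H) = weight G + weight H := by
  simp [weight]

lemma weight_nonneg {G : Multiset ℕ} (h : ∀ n ∈ G, n % 3 ≠ 2) : 0 ≤ weight G := by
  refine Multiset.sum_nonneg fun w hw => ?_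
  obtain ⟨n, hn, rfl⟩ := Multiset.mem_map.1 hw
  have := h n hn
  unfold stripWeight
  split_ifs <;> omega

lemma weight_nonpos {G : Multiset ℕ} (h : ∀ n ∈ G, n % 3 ≠ 1) : weight G ≤ 0 := by
  have := Multiset.sum_map_le_sum_map (s := G) stripWeight (fun _ => 0) fun n hn => by
    have := h n hn
    unfold stripWeight
    split_ifs <;> omega
  simpa [weight] using this

section Moves

variable {G G' : Multiset ℕ}

lemma LeftMove.weight_eq (h : LeftMove G G') :
    weight G' = weight G - 1 ∨ weight G' = weight G + 2 := by
  obtain ⟨n, hn, i, hi, rfl⟩ := h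
  rw [weight_split hn]
  unfold stripWeight
  split_ifs <;> omega

lemma RightMove.weight_eq (h : RightMove G G') :
    weight G' = weight G + 1 ∨ weight G' = weight G - 2 := by
  obtain ⟨n, hn, i, hi, rfl⟩ := h
  rw [weight_split hn]
  unfold stripWeight
  split_ifs <;> omega

lemma LeftMove.sum_lt (h : LeftMove G G') : G'.sum < G.sum := by
  obtain ⟨n, hn, i, hi, rfl⟩ := h
  have := sum_split hn i (n - 1 - i)
  omega

lemma RightMove.sum_lt (h : RightMove G G') : G'.sum < G.sum := by
  obtain ⟨n, hn, i, hi, rfl⟩ := h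
  have := sum_split hn i (n - 2 - i)
  omega

lemma exists_leftMove_weight_eq_sub_one {n : ℕ} (hn : n ∈ G) (h1 : 1 ≤ n) (h2 : n ≠ 2) :
    ∃ G', LeftMove G G' ∧ weight G' = weight G - 1 := by
  -- remove an end square, except from a strip `≡ 2` (of length `≥ 5`): leave `2` and `n - 3`
  obtain ⟨i, hi, hsplit⟩ : ∃ i, i + 1 ≤ n ∧
      stripWeight i + stripWeight (n - 1 - i) = stripWeight n - 1 := by
    by_cases h : n % 3 = 2
    · exact ⟨2, by omega, by unfold stripWeight; split_ifs <;> omega⟩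
    · exact ⟨0, by omega, by rw [stripWeight_zero]; unfold stripWeight; split_ifs <;> omega⟩
  exact ⟨_, ⟨n, hn, i, hi, rfl⟩, by rw [weight_split hn]; linarith⟩

lemma exists_leftMove_weight_eq_add_two (hn : 2 ∈ G) :
    ∃ G', LeftMove G G' ∧ weight G' = weight G + 2 :=
  ⟨_, ⟨2, hn, 0, by omega, rfl⟩, by rw [weight_split hn]; norm_num [stripWeight, add_assoc, one_add_one_eq_two]⟩

lemma exists_rightMove_weight_eq_add_one {n : ℕ} (hn : n ∈ G) (h2 : 2 ≤ n) :
    ∃ G', RightMove G G' ∧ weight G' = weight G + 1 := by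
  -- remove two end squares, except from a strip `≡ 1` (of length `≥ 4`): leave `1` and `n - 3`
  obtain ⟨i, hi, hsplit⟩ : ∃ i, i + 2 ≤ n ∧
      stripWeight i + stripWeight (n - 2 - i) = stripWeight n + 1 := by
    by_cases h : n % 3 = 1
    · exact ⟨1, by omega, by unfold stripWeight; split_ifs <;> omega⟩
    · exact ⟨0, by omega, by rw [stripWeight_zero]; unfold stripWeight; split_ifs <;> omega⟩
  exact ⟨_, ⟨n, hn, i, hi, rfl⟩, by rw [weight_split hn]; linarith⟩

end Moves

section Classification

variable {G : Multiset ℕ}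

lemma weight_of_leftWinsMover (h : LeftWinsMover G)
    (ih : ∀ G', LeftMove G G' → LeftWinsWaiter G' → weight G' ≤ 0 ∧ weight G' % 3 = 2) :
    weight G ≤ 0 ∧ weight G % 3 = 0 := by
  cases h with
  | cannot _ hstuck =>
    have hzero : ∀ n ∈ G, n = 0 := fun n hn => by
      by_contra hn0
      exact hstuck ⟨_, n, hn, 0, by omega, rfl⟩
    have := weight_nonneg (G := G) fun n hn => by simp [hzero n hn]
    have := weight_nonpos (G := G) fun n hn => by simp [hzero n hn]
    omega
  | move _ G' hmove hwin =>
    have := ih G' hmove hwin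
    have := hmove.weight_eq
    omega

lemma leftWinsMover_of_weight (hw : weight G ≤ 0 ∧ weight G % 3 = 0)
    (ih : ∀ G', LeftMove G G' → weight G' ≤ 0 ∧ weight G' % 3 = 2 → LeftWinsWaiter G') :
    LeftWinsMover G := by
  by_cases hdec : ∃ n ∈ G, 1 ≤ n ∧ n ≠ 2
  · obtain ⟨n, hn, h1, h2⟩ := hdec
    obtain ⟨G', hmove, hG'⟩ := exists_leftMove_weight_eq_sub_one hn h1 h2
    exact .move _ G' hmove (ih G' hmove (by omega))
  by_cases htwo : 2 ∈ G
  · push Not at hdec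
    have hrest : weight (G.erase 2) ≤ 0 := weight_nonpos fun n hn => by
      have := hdec n (Multiset.mem_of_mem_erase hn)
      omega
    have hneg : weight G < 0 := by
      rw [← Multiset.cons_erase htwo, weight, Multiset.map_cons, Multiset.sum_cons]
      exact add_neg_of_neg_of_nonpos (by simp [stripWeight]) hrest
    obtain ⟨G', hmove, hG'⟩ := exists_leftMove_weight_eq_add_two htwo
    exact .move _ G' hmove (ih G' hmove (by omega))
  · refine .cannot _ fun ⟨_, n, hn, i, hi, _⟩ => ?_
    by_cases h2 : n = 2
    · exact htwo (h2 ▸ hn)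
    · exact hdec ⟨n, hn, by omega, h2⟩

lemma weight_of_leftWinsWaiter (h : LeftWinsWaiter G)
    (ih : ∀ G', RightMove G G' → LeftWinsMover G' → weight G' ≤ 0 ∧ weight G' % 3 = 0) :
    weight G ≤ 0 ∧ weight G % 3 = 2 := by
  obtain ⟨_, ⟨_, n, hn, i, hi, _⟩, hwin⟩ := h
  obtain ⟨G', hmove, hG'⟩ := exists_rightMove_weight_eq_add_one hn (by omega)
  have := ih G' hmove (hwin G' hmove)
  omega

lemma leftWinsWaiter_of_weight (hw : weight G ≤ 0 ∧ weight G % 3 = 2)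
    (ih : ∀ G', RightMove G G' → weight G' ≤ 0 ∧ weight G' % 3 = 0 → LeftWinsMover G') :
    LeftWinsWaiter G := by
  obtain ⟨n, hn, h2⟩ : ∃ n ∈ G, n % 3 = 2 := by
    by_contra! h
    have := weight_nonneg h
    omega
  refine .intro _ ⟨_, n, hn, 0, by omega, rfl⟩ fun G' hmove => ih G' hmove ?_
  have := hmove.weight_eq
  omega

theorem leftWins_iff (G : Multiset ℕ) :
    (LeftWinsMover G ↔ weight G ≤ 0 ∧ weight G % 3 = 0) ∧
      (LeftWinsWaiter G ↔ weight G ≤ 0 ∧ weight G % 3 = 2) := by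
  induction hG : G.sum using Nat.strong_induction_on generalizing G with
  | _ k ih =>
    have ih' : ∀ G' : Multiset ℕ, G'.sum < G.sum →
        (LeftWinsMover G' ↔ weight G' ≤ 0 ∧ weight G' % 3 = 0) ∧
          (LeftWinsWaiter G' ↔ weight G' ≤ 0 ∧ weight G' % 3 = 2) :=
      fun G' hlt => ih G'.sum (hG ▸ hlt) G' rfl
    exact ⟨⟨fun h => weight_of_leftWinsMover h fun G' hm => (ih' G' hm.sum_lt).2.1,
        fun hw => leftWinsMover_of_weight hw fun G' hm => (ih' G' hm.sum_lt).2.2⟩,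
      ⟨fun h => weight_of_leftWinsWaiter h fun G' hm => (ih' G' hm.sum_lt).1.1,
        fun hw => leftWinsWaiter_of_weight hw fun G' hm => (ih' G' hm.sum_lt).1.2⟩⟩

lemma leftWinsMover_iff (G : Multiset ℕ) :
    LeftWinsMover G ↔ weight G ≤ 0 ∧ weight G % 3 = 0 :=
  (leftWins_iff G).1

lemma leftWinsWaiter_iff (G : Multiset ℕ) :
    LeftWinsWaiter G ↔ weight G ≤ 0 ∧ weight G % 3 = 2 :=
  (leftWins_iff G).2

lemma outcome_congr_weight {G H : Multiset ℕ} (h : weight G = weight H) :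
    outcome G = outcome H := by
  simp only [outcome, leftWinsMover_iff, leftWinsWaiter_iff, h]

end Classification

theorem kayles_asymmetric_inverse_pair :
    outcome (pos 1 0) = Outcome.R ∧ outcome (pos 0 1) = Outcome.P ∧
    (∀ X : Multiset ℕ, 0 ∉ X → outcome (pos 1 1 + X) = outcome X) := by
  have h10 : weight (pos 1 0) = 1 := by simp [pos, weight, stripWeight]
  have h01 : weight (pos 0 1) = -1 := by simp [pos, weight, stripWeight]
  have h11 : weight (pos 1 1) = 0 := by simp [pos, weight, stripWeight]
  refine ⟨?_, ?_, fun X _ => outcome_congr_weight (by rw [weight_add, h11, zero_add])⟩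
  · simp [outcome, leftWinsMover_iff, leftWinsWaiter_iff, h10]
  · simp [outcome, leftWinsMover_iff, leftWinsWaiter_iff, h01]
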